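/- arXiv:2410.03833 — 6 statements merged into one kernel-verified Lean document; each statement's English description precedes it below -/
import Mathlib

section
/- Theorem 3.1, part (i) (remaining loss of the fine-tuned model under distinct features): L(w_t, D_r) = 0; equivalently, X_rᵀ w_t = y_r, so the fine-tuned (unlearned) model fits the remaining data perfectly. -/
/-!
Because the features are distinct, `w_*^f` is invisible to the remaining data, so
`X_rᵀ w_* = X_rᵀ w_*^r`. The projection `P` fixes the columns of `X_r`, hence the pretrained model
already fits the remaining data: `X_rᵀ w_o = y_r = X_rᵀ w_*^r`. Thus `w_o - w_*^r` is orthogonal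
to the columns of `X_r`, and a fortiori to those of `X_t = X_r S`, so `P_t (w_o - w_*^r) = 0` and
fine-tuning leaves the pretrained model unchanged: `w_t = w_o`.
-/

open Matrix

namespace Matrix

variable {α m n n₁ n₂ : Type*}

theorem transpose_mul_eq_of_fromCols_transpose_mul_eq [Semiring α] [Fintype m]
    {A : Matrix m n₁ α} {B : Matrix m n₂ α} {P : Matrix m m α}
    (h : (fromCols A B)ᵀ * P = (fromCols A B)ᵀ) : Aᵀ * P = Aᵀ := by
  rw [transpose_fromCols, fromRows_mul] at h
  exact (fromRows_inj h).1

theorem fromRows_zero_transpose_mulVec_eq_zero [Semiring α] [Fintype n₁] [Fintype n₂]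
    (A : Matrix n₁ m α) {w : n₁ ⊕ n₂ → α} (hw : ∀ i, w (Sum.inl i) = 0) :
    (fromRows A (0 : Matrix n₂ m α))ᵀ *ᵥ w = 0 := by
  have hw' : w ∘ Sum.inl = 0 := funext hw
  rw [transpose_fromRows, fromCols_mulVec, hw', transpose_zero, mulVec_zero, zero_mulVec, add_zero]

section Projection

variable [CommRing α] [Fintype m] [Fintype n] [DecidableEq n]

theorem transpose_mul_projection {X : Matrix m n α} (hX : IsUnit (Xᵀ * X)) :
    Xᵀ * (X * (Xᵀ * X)⁻¹ * Xᵀ) = Xᵀ := by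
  simp only [← Matrix.mul_assoc]
  rw [Matrix.mul_assoc (Xᵀ * X),
    mul_nonsing_inv_cancel_left _ _ ((isUnit_iff_isUnit_det _).mp hX)]

theorem projection_mulVec_eq_zero (X : Matrix m n α) {v : m → α} (hv : Xᵀ *ᵥ v = 0) :
    (X * (Xᵀ * X)⁻¹ * Xᵀ) *ᵥ v = 0 := by
  rw [← mulVec_mulVec, hv, mulVec_zero]

end Projection

theorem one_sub_mulVec_add_mulVec_eq_self [Ring α] [Fintype n] [DecidableEq n]
    {P : Matrix n n α} {a b : n → α} (h : P *ᵥ (a - b) = 0) :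
    (1 - P) *ᵥ a + P *ᵥ b = a := by
  rw [mulVec_sub, sub_eq_zero] at h
  rw [sub_mulVec, one_mulVec, h, sub_add_cancel]

end Matrix

theorem remaining_loss_finetuned_distinct_general
    (d_r d_f n_r n_f n_t : ℕ)
    (R : Matrix (Fin d_r) (Fin n_r) ℝ)
    (X_r : Matrix (Fin d_r ⊕ Fin d_f) (Fin n_r) ℝ) (hXr : X_r = Matrix.fromRows R 0)
    (X_f : Matrix (Fin d_r ⊕ Fin d_f) (Fin n_f) ℝ)
    (X : Matrix (Fin d_r ⊕ Fin d_f) (Fin n_r ⊕ Fin n_f) ℝ) (hX : X = Matrix.fromCols X_r X_f)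
    (hXinv : IsUnit (Xᵀ * X))
    (wr wf : Fin d_r ⊕ Fin d_f → ℝ)
    (hwf : ∀ i, wf (Sum.inl i) = 0)
    (wstar : Fin d_r ⊕ Fin d_f → ℝ) (hws : wstar = wr + wf)
    (y_r : Fin n_r → ℝ) (hyr : y_r = X_rᵀ *ᵥ wstar)
    (S : Matrix (Fin n_r) (Fin n_t) ℝ)
    (X_t : Matrix (Fin d_r ⊕ Fin d_f) (Fin n_t) ℝ) (hXt : X_t = X_r * S)
    (P P_t : Matrix (Fin d_r ⊕ Fin d_f) (Fin d_r ⊕ Fin d_f) ℝ)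
    (hP : P = X * (Xᵀ * X)⁻¹ * Xᵀ)
    (hPt : P_t = X_t * (X_tᵀ * X_t)⁻¹ * X_tᵀ)
    (w_o w_t : Fin d_r ⊕ Fin d_f → ℝ)
    (hwo : w_o = P *ᵥ wstar)
    (hwt : w_t = (1 - P_t) *ᵥ w_o + P_t *ᵥ wr) :
    (1 / (n_r : ℝ)) * ((X_rᵀ *ᵥ w_t - y_r) ⬝ᵥ (X_rᵀ *ᵥ w_t - y_r)) = 0 ∧ X_rᵀ *ᵥ w_t = y_r := by
  have hXrP : X_rᵀ * P = X_rᵀ :=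
    transpose_mul_eq_of_fromCols_transpose_mul_eq (hX ▸ hP ▸ transpose_mul_projection hXinv)
  have hwf_unseen : X_rᵀ *ᵥ wf = 0 := hXr ▸ fromRows_zero_transpose_mulVec_eq_zero R hwf
  have hwo_fit : X_rᵀ *ᵥ w_o = y_r := by rw [hwo, mulVec_mulVec, hXrP, hyr]
  have hwo_sub_wr : X_rᵀ *ᵥ (w_o - wr) = 0 := by
    rw [mulVec_sub, hwo_fit, hyr, hws, mulVec_add, hwf_unseen, add_zero, sub_self]
  have hPt_kills : P_t *ᵥ (w_o - wr) = 0 := hPt ▸ projection_mulVec_eq_zero X_t (by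
    rw [hXt, transpose_mul, ← mulVec_mulVec, hwo_sub_wr, mulVec_zero])
  have hwt_fit : X_rᵀ *ᵥ w_t = y_r := by
    rw [hwt, one_sub_mulVec_add_mulVec_eq_self hPt_kills, hwo_fit]
  exact ⟨by rw [hwt_fit, sub_self, dotProduct_zero, mul_zero], hwt_fit⟩

/-- remaining_loss_finetuned_distinct -/
theorem remaining_loss_finetuned_distinct
    (d_r d_f n_r n_f n_t : ℕ)
    (hd_r : 0 < d_r) (hd_f : 0 < d_f) (hn_r : 0 < n_r) (hn_f : 0 < n_f) (hn_t : 0 < n_t)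
    (R : Matrix (Fin d_r) (Fin n_r) ℝ) (F : Matrix (Fin d_f) (Fin n_f) ℝ)
    (hR : IsUnit (Rᵀ * R)) (hF : IsUnit (Fᵀ * F))
    (X_r : Matrix (Fin d_r ⊕ Fin d_f) (Fin n_r) ℝ) (hXr : X_r = Matrix.fromRows R 0)
    (X_f : Matrix (Fin d_r ⊕ Fin d_f) (Fin n_f) ℝ) (hXf : X_f = Matrix.fromRows 0 F)
    (X : Matrix (Fin d_r ⊕ Fin d_f) (Fin n_r ⊕ Fin n_f) ℝ) (hX : X = Matrix.fromCols X_r X_f)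
    (hXinv : IsUnit (Xᵀ * X))
    (wr wf : Fin d_r ⊕ Fin d_f → ℝ)
    (hwr : ∀ i, wr (Sum.inr i) = 0) (hwf : ∀ i, wf (Sum.inl i) = 0)
    (wstar : Fin d_r ⊕ Fin d_f → ℝ) (hws : wstar = wr + wf)
    (y_r : Fin n_r → ℝ) (hyr : y_r = X_rᵀ *ᵥ wstar)
    (y_f : Fin n_f → ℝ) (hyf : y_f = X_fᵀ *ᵥ wstar)
    (S : Matrix (Fin n_r) (Fin n_t) ℝ)
    (X_t : Matrix (Fin d_r ⊕ Fin d_f) (Fin n_t) ℝ) (hXt : X_t = X_r * S)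
    (hXtinv : IsUnit (X_tᵀ * X_t))
    (P P_r P_t : Matrix (Fin d_r ⊕ Fin d_f) (Fin d_r ⊕ Fin d_f) ℝ)
    (hP : P = X * (Xᵀ * X)⁻¹ * Xᵀ)
    (hPr : P_r = X_r * (X_rᵀ * X_r)⁻¹ * X_rᵀ)
    (hPt : P_t = X_t * (X_tᵀ * X_t)⁻¹ * X_tᵀ)
    (w_o w_t w_g : Fin d_r ⊕ Fin d_f → ℝ)
    (hwo : w_o = P *ᵥ wstar)
    (hwt : w_t = (1 - P_t) *ᵥ w_o + P_t *ᵥ wr)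
    (hwg : w_g = P_r *ᵥ wr) :
    (1 / (n_r : ℝ)) * ((X_rᵀ *ᵥ w_t - y_r) ⬝ᵥ (X_rᵀ *ᵥ w_t - y_r)) = 0 ∧ X_rᵀ *ᵥ w_t = y_r :=
  remaining_loss_finetuned_distinct_general d_r d_f n_r n_f n_t R X_r hXr X_f X hX hXinv wr wf hwf
    wstar hws y_r hyr S X_t hXt P P_t hP hPt w_o w_t hwo hwt
end

section
/- Theorem 3.1, part (ii) (unlearning loss of the fine-tuned model under distinct features): L(w_t, D_f) = 0; equivalently, X_fᵀ w_t = y_f, so the fine-tuned (unlearned) model still fits the forgetting data perfectly and fails to forget it. -/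
/-!
The fine-tuning set spans only directions of the remaining data, and in the distinct-features
setting these are orthogonal to the forgetting data: `X_fᵀ X_r = 0`, hence `X_fᵀ P_t = 0`.
So on the forgetting data the fine-tuned model `w_t` behaves exactly like the pretrained model
`w_o = P w_*`, and `X_fᵀ P = X_fᵀ` because `P` projects onto a space containing the columns of
`X_f`. Thus `X_fᵀ w_t = X_fᵀ w_* = y_f`.
-/

open Matrix

namespace Matrix

variable {m n k R : Type*} [Fintype m] [Fintype n] [CommRing R]

noncomputable def colProj [DecidableEq n] (A : Matrix m n R) : Matrix m m R :=
  A * (Aᵀ * A)⁻¹ * Aᵀ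

theorem transpose_mul_colProj [DecidableEq n] {A : Matrix m n R} (hA : IsUnit (Aᵀ * A)) :
    Aᵀ * colProj A = Aᵀ := by
  rw [colProj, ← Matrix.mul_assoc, ← Matrix.mul_assoc,
    mul_nonsing_inv _ ((isUnit_iff_isUnit_det _).mp hA), Matrix.one_mul]

theorem mul_colProj_mul_eq_zero {l : Type*} [Fintype l] [DecidableEq l]
    {B : Matrix k m R} {A : Matrix m n R} (h : B * A = 0) (S : Matrix n l R) :
    B * colProj (A * S) = 0 := by
  simp only [colProj, ← Matrix.mul_assoc, h, Matrix.zero_mul]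

theorem mulVec_one_sub_mulVec_mulVec_add_mulVec [DecidableEq m]
    {C : Matrix k m R} {P Q : Matrix m m R} (hQ : C * Q = 0) (hP : C * P = C) (w v : m → R) :
    C *ᵥ ((1 - Q) *ᵥ (P *ᵥ w) + Q *ᵥ v) = C *ᵥ w := by
  rw [mulVec_add, mulVec_mulVec, mulVec_mulVec, mulVec_mulVec, Matrix.mul_sub, Matrix.mul_one,
    hQ, zero_mulVec, add_zero, sub_zero, hP]

section Blocks

variable {n₁ n₂ p₁ p₂ : Type*}

theorem transpose_mul_eq_of_transpose_fromCols_mul_eq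
    {A₁ : Matrix m n₁ R} {A₂ : Matrix m n₂ R} {M : Matrix m m R}
    (h : (fromCols A₁ A₂)ᵀ * M = (fromCols A₁ A₂)ᵀ) : A₂ᵀ * M = A₂ᵀ := by
  rw [transpose_fromCols, fromRows_mul] at h
  exact (fromRows_inj h).2

theorem transpose_fromRows_zero_mul_fromRows_zero [Fintype p₁] [Fintype p₂]
    (B : Matrix p₁ n₁ R) (C : Matrix p₂ n₂ R) :
    (fromRows (0 : Matrix p₁ n₂ R) C)ᵀ * fromRows B (0 : Matrix p₂ n₁ R) = 0 := by
  rw [transpose_fromRows, fromCols_mul_fromRows]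
  simp

end Blocks

end Matrix

theorem unlearning_loss_finetuned_distinct_general
    (d_r d_f n_r n_f n_t : ℕ)
    (R : Matrix (Fin d_r) (Fin n_r) ℝ) (F : Matrix (Fin d_f) (Fin n_f) ℝ)
    (X_r : Matrix (Fin d_r ⊕ Fin d_f) (Fin n_r) ℝ) (hXr : X_r = Matrix.fromRows R 0)
    (X_f : Matrix (Fin d_r ⊕ Fin d_f) (Fin n_f) ℝ) (hXf : X_f = Matrix.fromRows 0 F)
    (X : Matrix (Fin d_r ⊕ Fin d_f) (Fin n_r ⊕ Fin n_f) ℝ) (hX : X = Matrix.fromCols X_r X_f)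
    (hXinv : IsUnit (Xᵀ * X))
    (wr : Fin d_r ⊕ Fin d_f → ℝ)
    (wstar : Fin d_r ⊕ Fin d_f → ℝ)
    (y_f : Fin n_f → ℝ) (hyf : y_f = X_fᵀ *ᵥ wstar)
    (S : Matrix (Fin n_r) (Fin n_t) ℝ)
    (X_t : Matrix (Fin d_r ⊕ Fin d_f) (Fin n_t) ℝ) (hXt : X_t = X_r * S)
    (P P_t : Matrix (Fin d_r ⊕ Fin d_f) (Fin d_r ⊕ Fin d_f) ℝ)
    (hP : P = X * (Xᵀ * X)⁻¹ * Xᵀ)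
    (hPt : P_t = X_t * (X_tᵀ * X_t)⁻¹ * X_tᵀ)
    (w_o w_t : Fin d_r ⊕ Fin d_f → ℝ)
    (hwo : w_o = P *ᵥ wstar)
    (hwt : w_t = (1 - P_t) *ᵥ w_o + P_t *ᵥ wr) :
    (1 / (n_f : ℝ)) * ((X_fᵀ *ᵥ w_t - y_f) ⬝ᵥ (X_fᵀ *ᵥ w_t - y_f)) = 0 ∧ X_fᵀ *ᵥ w_t = y_f := by
  have hXfXr : X_fᵀ * X_r = 0 := by
    rw [hXf, hXr]
    exact transpose_fromRows_zero_mul_fromRows_zero R F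
  have hXfPt : X_fᵀ * P_t = 0 := by
    rw [hPt, hXt]
    exact mul_colProj_mul_eq_zero hXfXr S
  have hXP : Xᵀ * P = Xᵀ := by
    rw [hP]
    exact transpose_mul_colProj hXinv
  have hXfP : X_fᵀ * P = X_fᵀ := by
    rw [hX] at hXP
    exact transpose_mul_eq_of_transpose_fromCols_mul_eq hXP
  have hfit : X_fᵀ *ᵥ w_t = y_f := by
    rw [hwt, hwo, hyf, mulVec_one_sub_mulVec_mulVec_add_mulVec hXfPt hXfP]
  exact ⟨by simp [hfit], hfit⟩

/-- unlearning_loss_finetuned_distinct -/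
theorem unlearning_loss_finetuned_distinct
    (d_r d_f n_r n_f n_t : ℕ)
    (hd_r : 0 < d_r) (hd_f : 0 < d_f) (hn_r : 0 < n_r) (hn_f : 0 < n_f) (hn_t : 0 < n_t)
    (R : Matrix (Fin d_r) (Fin n_r) ℝ) (F : Matrix (Fin d_f) (Fin n_f) ℝ)
    (hR : IsUnit (Rᵀ * R)) (hF : IsUnit (Fᵀ * F))
    (X_r : Matrix (Fin d_r ⊕ Fin d_f) (Fin n_r) ℝ) (hXr : X_r = Matrix.fromRows R 0)
    (X_f : Matrix (Fin d_r ⊕ Fin d_f) (Fin n_f) ℝ) (hXf : X_f = Matrix.fromRows 0 F)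
    (X : Matrix (Fin d_r ⊕ Fin d_f) (Fin n_r ⊕ Fin n_f) ℝ) (hX : X = Matrix.fromCols X_r X_f)
    (hXinv : IsUnit (Xᵀ * X))
    (wr wf : Fin d_r ⊕ Fin d_f → ℝ)
    (hwr : ∀ i, wr (Sum.inr i) = 0) (hwf : ∀ i, wf (Sum.inl i) = 0)
    (wstar : Fin d_r ⊕ Fin d_f → ℝ) (hws : wstar = wr + wf)
    (y_r : Fin n_r → ℝ) (hyr : y_r = X_rᵀ *ᵥ wstar)
    (y_f : Fin n_f → ℝ) (hyf : y_f = X_fᵀ *ᵥ wstar)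
    (S : Matrix (Fin n_r) (Fin n_t) ℝ)
    (X_t : Matrix (Fin d_r ⊕ Fin d_f) (Fin n_t) ℝ) (hXt : X_t = X_r * S)
    (hXtinv : IsUnit (X_tᵀ * X_t))
    (P P_r P_t : Matrix (Fin d_r ⊕ Fin d_f) (Fin d_r ⊕ Fin d_f) ℝ)
    (hP : P = X * (Xᵀ * X)⁻¹ * Xᵀ)
    (hPr : P_r = X_r * (X_rᵀ * X_r)⁻¹ * X_rᵀ)
    (hPt : P_t = X_t * (X_tᵀ * X_t)⁻¹ * X_tᵀ)
    (w_o w_t w_g : Fin d_r ⊕ Fin d_f → ℝ)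
    (hwo : w_o = P *ᵥ wstar)
    (hwt : w_t = (1 - P_t) *ᵥ w_o + P_t *ᵥ wr)
    (hwg : w_g = P_r *ᵥ wr) :
    (1 / (n_f : ℝ)) * ((X_fᵀ *ᵥ w_t - y_f) ⬝ᵥ (X_fᵀ *ᵥ w_t - y_f)) = 0 ∧ X_fᵀ *ᵥ w_t = y_f :=
  unlearning_loss_finetuned_distinct_general d_r d_f n_r n_f n_t R F X_r hXr X_f hXf X hX hXinv wr
    wstar y_f hyf S X_t hXt P P_t hP hPt w_o w_t hwo hwt
end

section
/- Theorem 3.1, part (iv) (unlearning loss of the golden model under distinct features): L(w_g, D_f) = ‖w_*^f‖²_{(1/n_f)·X_f X_fᵀ}, i.e., (1/n_f)·‖X_fᵀ w_g − y_f‖₂² = (1/n_f)·(w_*^f)ᵀ X_f X_fᵀ w_*^f. -/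
open Matrix

/-!
With distinct features the forgetting data `X_f` is orthogonal to the remaining data `X_r`,
hence to the range of `P_r`: the golden model predicts `0` on the forgetting set. Since `w_*^r`
vanishes on the forgetting features, `y_f = X_fᵀ w_*^f`, and the residual norm is
`‖X_fᵀ w_*^f‖² = (w_*^f)ᵀ X_f X_fᵀ w_*^f`.
-/

namespace Matrix

variable {m₁ m₂ n k R : Type*} [Fintype m₁] [Fintype m₂]

lemma transpose_fromRows_zero_mul_fromRows_zero_s3 [Semiring R]
    (A : Matrix m₁ n R) (B : Matrix m₂ k R) :
    (fromRows (0 : Matrix m₁ k R) B)ᵀ * fromRows A (0 : Matrix m₂ n R) = 0 := by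
  simp [transpose_fromRows, fromCols_mul_fromRows]

lemma transpose_fromRows_zero_mulVec [Semiring R]
    (B : Matrix m₂ k R) (v : m₁ ⊕ m₂ → R) :
    (fromRows (0 : Matrix m₁ k R) B)ᵀ *ᵥ v = Bᵀ *ᵥ (v ∘ Sum.inr) := by
  rw [transpose_fromRows, fromCols_mulVec, transpose_zero, zero_mulVec, zero_add]

lemma transpose_mulVec_dotProduct_self [CommSemiring R] [Fintype k] (A : Matrix m₁ k R)
    (v : m₁ → R) :
    (Aᵀ *ᵥ v) ⬝ᵥ (Aᵀ *ᵥ v) = v ⬝ᵥ ((A * Aᵀ) *ᵥ v) := by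
  rw [← mulVec_mulVec, dotProduct_mulVec, vecMul_transpose, dotProduct_comm]

end Matrix

theorem unlearning_loss_golden_distinct_general
    (d_r d_f n_r n_f : ℕ)
    (R : Matrix (Fin d_r) (Fin n_r) ℝ) (F : Matrix (Fin d_f) (Fin n_f) ℝ)
    (X_r : Matrix (Fin d_r ⊕ Fin d_f) (Fin n_r) ℝ) (hXr : X_r = Matrix.fromRows R 0)
    (X_f : Matrix (Fin d_r ⊕ Fin d_f) (Fin n_f) ℝ) (hXf : X_f = Matrix.fromRows 0 F)
    (wr wf : Fin d_r ⊕ Fin d_f → ℝ)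
    (hwr : ∀ i, wr (Sum.inr i) = 0)
    (wstar : Fin d_r ⊕ Fin d_f → ℝ) (hws : wstar = wr + wf)
    (y_f : Fin n_f → ℝ) (hyf : y_f = X_fᵀ *ᵥ wstar)
    (P_r : Matrix (Fin d_r ⊕ Fin d_f) (Fin d_r ⊕ Fin d_f) ℝ)
    (hPr : P_r = X_r * (X_rᵀ * X_r)⁻¹ * X_rᵀ)
    (w_g : Fin d_r ⊕ Fin d_f → ℝ)
    (hwg : w_g = P_r *ᵥ wr) :
    (1 / (n_f : ℝ)) * ((X_fᵀ *ᵥ w_g - y_f) ⬝ᵥ (X_fᵀ *ᵥ w_g - y_f)) =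
      (1 / (n_f : ℝ)) * (wf ⬝ᵥ ((X_f * X_fᵀ) *ᵥ wf)) := by
  have h_orth : X_fᵀ * X_r = 0 := by
    rw [hXf, hXr, transpose_fromRows_zero_mul_fromRows_zero_s3]
  have h_golden : X_fᵀ *ᵥ w_g = 0 := by
    rw [hwg, hPr, mulVec_mulVec, ← Matrix.mul_assoc, ← Matrix.mul_assoc, h_orth,
      Matrix.zero_mul, Matrix.zero_mul, zero_mulVec]
  have h_retain : X_fᵀ *ᵥ wr = 0 := by
    rw [hXf, transpose_fromRows_zero_mulVec, show wr ∘ Sum.inr = 0 from funext hwr, mulVec_zero]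
  rw [h_golden, hyf, hws, mulVec_add, h_retain, zero_add, zero_sub, neg_dotProduct_neg,
    transpose_mulVec_dotProduct_self]

/-- unlearning_loss_golden_distinct -/
theorem unlearning_loss_golden_distinct
    (d_r d_f n_r n_f n_t : ℕ)
    (hd_r : 0 < d_r) (hd_f : 0 < d_f) (hn_r : 0 < n_r) (hn_f : 0 < n_f) (hn_t : 0 < n_t)
    (R : Matrix (Fin d_r) (Fin n_r) ℝ) (F : Matrix (Fin d_f) (Fin n_f) ℝ)
    (hR : IsUnit (Rᵀ * R)) (hF : IsUnit (Fᵀ * F))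
    (X_r : Matrix (Fin d_r ⊕ Fin d_f) (Fin n_r) ℝ) (hXr : X_r = Matrix.fromRows R 0)
    (X_f : Matrix (Fin d_r ⊕ Fin d_f) (Fin n_f) ℝ) (hXf : X_f = Matrix.fromRows 0 F)
    (X : Matrix (Fin d_r ⊕ Fin d_f) (Fin n_r ⊕ Fin n_f) ℝ) (hX : X = Matrix.fromCols X_r X_f)
    (hXinv : IsUnit (Xᵀ * X))
    (wr wf : Fin d_r ⊕ Fin d_f → ℝ)
    (hwr : ∀ i, wr (Sum.inr i) = 0) (hwf : ∀ i, wf (Sum.inl i) = 0)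
    (wstar : Fin d_r ⊕ Fin d_f → ℝ) (hws : wstar = wr + wf)
    (y_r : Fin n_r → ℝ) (hyr : y_r = X_rᵀ *ᵥ wstar)
    (y_f : Fin n_f → ℝ) (hyf : y_f = X_fᵀ *ᵥ wstar)
    (S : Matrix (Fin n_r) (Fin n_t) ℝ)
    (X_t : Matrix (Fin d_r ⊕ Fin d_f) (Fin n_t) ℝ) (hXt : X_t = X_r * S)
    (hXtinv : IsUnit (X_tᵀ * X_t))
    (P P_r P_t : Matrix (Fin d_r ⊕ Fin d_f) (Fin d_r ⊕ Fin d_f) ℝ)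
    (hP : P = X * (Xᵀ * X)⁻¹ * Xᵀ)
    (hPr : P_r = X_r * (X_rᵀ * X_r)⁻¹ * X_rᵀ)
    (hPt : P_t = X_t * (X_tᵀ * X_t)⁻¹ * X_tᵀ)
    (w_o w_t w_g : Fin d_r ⊕ Fin d_f → ℝ)
    (hwo : w_o = P *ᵥ wstar)
    (hwt : w_t = (1 - P_t) *ᵥ w_o + P_t *ᵥ wr)
    (hwg : w_g = P_r *ᵥ wr) :
    (1 / (n_f : ℝ)) * ((X_fᵀ *ᵥ w_g - y_f) ⬝ᵥ (X_fᵀ *ᵥ w_g - y_f)) =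
      (1 / (n_f : ℝ)) * (wf ⬝ᵥ ((X_f * X_fᵀ) *ᵥ wf)) :=
  unlearning_loss_golden_distinct_general d_r d_f n_r n_f R F X_r hXr X_f hXf wr wf hwr wstar hws
    y_f hyf P_r hPr w_g hwg
end

section
/- Decomposition of the fine-tuned model under distinct features (Equation (5) of the paper): w_t = P w_*^r + (P − P_t) w_*^f, i.e., the unlearned model splits into a component P w_*^r preserving accuracy on the remaining data and a residual component (P − P_t) w_*^f of the forgetting data. -/
open Matrix

/-!
Since `X_t = X_r S` and `X_r` is a block of columns of `X`, the column space of `X_t` lies in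
that of `X`, so the projection `P_t` is unchanged by composing with `P`: `P_t P = P_t`. Hence
`(I - P_t) P w_* = (P - P_t) w_*`, and adding `P_t w_*^r` leaves `P w_*^r + (P - P_t) w_*^f`.
-/

namespace Matrix

theorem fromCols_mul_fromRows_zero {R l m n k : Type*} [Semiring R] [Fintype m] [Fintype n]
    (A : Matrix l m R) (B : Matrix l n R) (S : Matrix m k R) :
    fromCols A B * fromRows S (0 : Matrix n k R) = A * S := by
  rw [fromCols_mul_fromRows, Matrix.mul_zero, add_zero]

section Projection

variable {m n k R : Type*} [Fintype m] [Fintype n] [DecidableEq n] [CommRing R]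

theorem transpose_mul_mul_projection {A : Matrix m n R} (hA : IsUnit (Aᵀ * A))
    (T : Matrix n k R) : (A * T)ᵀ * (A * (Aᵀ * A)⁻¹ * Aᵀ) = (A * T)ᵀ := by
  have hdet : IsUnit (Aᵀ * A).det := (isUnit_iff_isUnit_det _).mp hA
  calc (A * T)ᵀ * (A * (Aᵀ * A)⁻¹ * Aᵀ) = Tᵀ * ((Aᵀ * A) * (Aᵀ * A)⁻¹) * Aᵀ := by
        simp only [transpose_mul, Matrix.mul_assoc]
    _ = (A * T)ᵀ := by rw [mul_nonsing_inv _ hdet, Matrix.mul_one, transpose_mul]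

theorem mul_mul_transpose_mul_projection [Fintype k] {A : Matrix m n R} (hA : IsUnit (Aᵀ * A))
    (T : Matrix n k R) (M : Matrix k k R) :
    A * T * M * (A * T)ᵀ * (A * (Aᵀ * A)⁻¹ * Aᵀ) = A * T * M * (A * T)ᵀ := by
  rw [Matrix.mul_assoc _ (A * T)ᵀ, transpose_mul_mul_projection hA]

end Projection

end Matrix

theorem finetuned_decomposition_distinct_general
    (d_r d_f n_r n_f n_t : ℕ)
    (X_r : Matrix (Fin d_r ⊕ Fin d_f) (Fin n_r) ℝ)
    (X_f : Matrix (Fin d_r ⊕ Fin d_f) (Fin n_f) ℝ)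
    (X : Matrix (Fin d_r ⊕ Fin d_f) (Fin n_r ⊕ Fin n_f) ℝ) (hX : X = Matrix.fromCols X_r X_f)
    (hXinv : IsUnit (Xᵀ * X))
    (wr wf : Fin d_r ⊕ Fin d_f → ℝ)
    (wstar : Fin d_r ⊕ Fin d_f → ℝ) (hws : wstar = wr + wf)
    (S : Matrix (Fin n_r) (Fin n_t) ℝ)
    (X_t : Matrix (Fin d_r ⊕ Fin d_f) (Fin n_t) ℝ) (hXt : X_t = X_r * S)
    (P P_t : Matrix (Fin d_r ⊕ Fin d_f) (Fin d_r ⊕ Fin d_f) ℝ)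
    (hP : P = X * (Xᵀ * X)⁻¹ * Xᵀ)
    (hPt : P_t = X_t * (X_tᵀ * X_t)⁻¹ * X_tᵀ)
    (w_o w_t : Fin d_r ⊕ Fin d_f → ℝ)
    (hwo : w_o = P *ᵥ wstar)
    (hwt : w_t = (1 - P_t) *ᵥ w_o + P_t *ᵥ wr) :
    w_t = P *ᵥ wr + (P - P_t) *ᵥ wf := by
  have hXt_cols : X_t = X * fromRows S (0 : Matrix (Fin n_f) (Fin n_t) ℝ) := by
    rw [hXt, hX, fromCols_mul_fromRows_zero]
  have hPtP : P_t * P = P_t := by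
    rw [hPt, hP, hXt_cols, mul_mul_transpose_mul_projection hXinv]
  have hPtP_vec (v : Fin d_r ⊕ Fin d_f → ℝ) : P_t *ᵥ (P *ᵥ v) = P_t *ᵥ v := by
    rw [mulVec_mulVec, hPtP]
  rw [hwt, hwo, hws, sub_mulVec, one_mulVec, hPtP_vec]
  simp only [sub_mulVec, mulVec_add]
  abel

/-- finetuned_decomposition_distinct -/
theorem finetuned_decomposition_distinct
    (d_r d_f n_r n_f n_t : ℕ)
    (hd_r : 0 < d_r) (hd_f : 0 < d_f) (hn_r : 0 < n_r) (hn_f : 0 < n_f) (hn_t : 0 < n_t)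
    (R : Matrix (Fin d_r) (Fin n_r) ℝ) (F : Matrix (Fin d_f) (Fin n_f) ℝ)
    (hR : IsUnit (Rᵀ * R)) (hF : IsUnit (Fᵀ * F))
    (X_r : Matrix (Fin d_r ⊕ Fin d_f) (Fin n_r) ℝ) (hXr : X_r = Matrix.fromRows R 0)
    (X_f : Matrix (Fin d_r ⊕ Fin d_f) (Fin n_f) ℝ) (hXf : X_f = Matrix.fromRows 0 F)
    (X : Matrix (Fin d_r ⊕ Fin d_f) (Fin n_r ⊕ Fin n_f) ℝ) (hX : X = Matrix.fromCols X_r X_f)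
    (hXinv : IsUnit (Xᵀ * X))
    (wr wf : Fin d_r ⊕ Fin d_f → ℝ)
    (hwr : ∀ i, wr (Sum.inr i) = 0) (hwf : ∀ i, wf (Sum.inl i) = 0)
    (wstar : Fin d_r ⊕ Fin d_f → ℝ) (hws : wstar = wr + wf)
    (y_r : Fin n_r → ℝ) (hyr : y_r = X_rᵀ *ᵥ wstar)
    (y_f : Fin n_f → ℝ) (hyf : y_f = X_fᵀ *ᵥ wstar)
    (S : Matrix (Fin n_r) (Fin n_t) ℝ)
    (X_t : Matrix (Fin d_r ⊕ Fin d_f) (Fin n_t) ℝ) (hXt : X_t = X_r * S)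
    (hXtinv : IsUnit (X_tᵀ * X_t))
    (P P_r P_t : Matrix (Fin d_r ⊕ Fin d_f) (Fin d_r ⊕ Fin d_f) ℝ)
    (hP : P = X * (Xᵀ * X)⁻¹ * Xᵀ)
    (hPr : P_r = X_r * (X_rᵀ * X_r)⁻¹ * X_rᵀ)
    (hPt : P_t = X_t * (X_tᵀ * X_t)⁻¹ * X_tᵀ)
    (w_o w_t w_g : Fin d_r ⊕ Fin d_f → ℝ)
    (hwo : w_o = P *ᵥ wstar)
    (hwt : w_t = (1 - P_t) *ᵥ w_o + P_t *ᵥ wr)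
    (hwg : w_g = P_r *ᵥ wr) :
    w_t = P *ᵥ wr + (P - P_t) *ᵥ wf :=
  finetuned_decomposition_distinct_general d_r d_f n_r n_f n_t X_r X_f X hX hXinv wr wf wstar hws S
    X_t hXt P P_t hP hPt w_o w_t hwo hwt
end

section
/- Theorem 3.2, part (i) (remaining loss of the fine-tuned model under overlapping features): L(w_t, D_r) = 0; equivalently, X_rᵀ w_t = y_r. -/
/-!
Fine-tuning does not move the pretrained model at all. Since `w_o = P w_*` is the least-squares fit
on all the data, it interpolates every training label, in particular `X_rᵀ w_o = X_rᵀ w_*`.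
The forgetting-only weights `w_*^f` are invisible to `X_r`, so
`X_rᵀ w_o = X_rᵀ (w_*^r + w_*^lap)`, and as the columns of `X_t` lie in the span of those of `X_r`,
the projection `P_t` does not distinguish `w_o` from `w_*^r + w_*^lap`.
Hence `w_t = w_o - P_t w_o + P_t w_o = w_o`.
-/

open Matrix

namespace Matrix

variable {m n n₁ n₂ α : Type*}

theorem transpose_mul_mul_inv_mul_transpose [CommRing α] [Fintype m] [Fintype n] [DecidableEq n]
    {X : Matrix m n α} (h : IsUnit (Xᵀ * X)) : Xᵀ * (X * (Xᵀ * X)⁻¹ * Xᵀ) = Xᵀ := by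
  rw [← Matrix.mul_assoc, ← Matrix.mul_assoc, mul_nonsing_inv _ ((isUnit_iff_isUnit_det _).mp h),
    Matrix.one_mul]

theorem mul_mul_transpose_mulVec_congr [Semiring α] [Fintype m] [Fintype n]
    (X : Matrix m n α) (M : Matrix n n α) {v w : m → α} (h : Xᵀ *ᵥ v = Xᵀ *ᵥ w) :
    (X * M * Xᵀ) *ᵥ v = (X * M * Xᵀ) *ᵥ w := by
  rw [← mulVec_mulVec, h, mulVec_mulVec]

theorem transpose_mulVec_eq_of_fromCols [Semiring α] [Fintype m]
    {A : Matrix m n₁ α} {B : Matrix m n₂ α} {v w : m → α}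
    (h : (fromCols A B)ᵀ *ᵥ v = (fromCols A B)ᵀ *ᵥ w) : Aᵀ *ᵥ v = Aᵀ *ᵥ w := by
  simpa [transpose_fromCols] using congrArg (· ∘ Sum.inl) h

theorem transpose_fromRows_mulVec [Semiring α] [Fintype n₁] [Fintype n₂] (A : Matrix n₁ m α)
    (B : Matrix n₂ m α) (v : n₁ ⊕ n₂ → α) :
    (fromRows A B)ᵀ *ᵥ v = Aᵀ *ᵥ (v ∘ Sum.inl) + Bᵀ *ᵥ (v ∘ Sum.inr) := by
  rw [transpose_fromRows, fromCols_mulVec]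

end Matrix

theorem remaining_loss_finetuned_overlap_general
    (d_r d_lap d_f n_r n_f n_t : ℕ)
    (R : Matrix (Fin d_r) (Fin n_r) ℝ) (L1 : Matrix (Fin d_lap) (Fin n_r) ℝ)
    (X_r : Matrix (Fin d_r ⊕ (Fin d_lap ⊕ Fin d_f)) (Fin n_r) ℝ)
    (hXr : X_r = Matrix.fromRows R (Matrix.fromRows L1 0))
    (X_f : Matrix (Fin d_r ⊕ (Fin d_lap ⊕ Fin d_f)) (Fin n_f) ℝ)
    (X : Matrix (Fin d_r ⊕ (Fin d_lap ⊕ Fin d_f)) (Fin n_r ⊕ Fin n_f) ℝ)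
    (hX : X = Matrix.fromCols X_r X_f)
    (hXinv : IsUnit (Xᵀ * X))
    (wr wl wf : Fin d_r ⊕ (Fin d_lap ⊕ Fin d_f) → ℝ)
    (hwf1 : ∀ i, wf (Sum.inl i) = 0) (hwf2 : ∀ i, wf (Sum.inr (Sum.inl i)) = 0)
    (wstar : Fin d_r ⊕ (Fin d_lap ⊕ Fin d_f) → ℝ) (hws : wstar = wr + wl + wf)
    (y_r : Fin n_r → ℝ) (hyr : y_r = X_rᵀ *ᵥ wstar)
    (S : Matrix (Fin n_r) (Fin n_t) ℝ)
    (X_t : Matrix (Fin d_r ⊕ (Fin d_lap ⊕ Fin d_f)) (Fin n_t) ℝ) (hXt : X_t = X_r * S)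
    (P P_t : Matrix (Fin d_r ⊕ (Fin d_lap ⊕ Fin d_f)) (Fin d_r ⊕ (Fin d_lap ⊕ Fin d_f)) ℝ)
    (hP : P = X * (Xᵀ * X)⁻¹ * Xᵀ)
    (hPt : P_t = X_t * (X_tᵀ * X_t)⁻¹ * X_tᵀ)
    (w_o w_t : Fin d_r ⊕ (Fin d_lap ⊕ Fin d_f) → ℝ)
    (hwo : w_o = P *ᵥ wstar)
    (hwt : w_t = (1 - P_t) *ᵥ w_o + P_t *ᵥ (wr + wl)) :
    (1 / (n_r : ℝ)) * ((X_rᵀ *ᵥ w_t - y_r) ⬝ᵥ (X_rᵀ *ᵥ w_t - y_r)) = 0 ∧ X_rᵀ *ᵥ w_t = y_r := by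
  have hXw_o : Xᵀ *ᵥ w_o = Xᵀ *ᵥ wstar := by
    rw [hwo, hP, mulVec_mulVec, transpose_mul_mul_inv_mul_transpose hXinv]
  have hXrw_o : X_rᵀ *ᵥ w_o = y_r :=
    hyr ▸ transpose_mulVec_eq_of_fromCols (B := X_f) (hX ▸ hXw_o)
  have hXrwf : X_rᵀ *ᵥ wf = 0 := by
    have hwf1' : wf ∘ Sum.inl = 0 := funext hwf1
    have hwf2' : (wf ∘ Sum.inr) ∘ Sum.inl = 0 := funext hwf2
    rw [hXr, transpose_fromRows_mulVec, transpose_fromRows_mulVec, hwf1', hwf2', transpose_zero,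
      mulVec_zero, mulVec_zero, zero_mulVec, zero_add, zero_add]
  have hXtw_o : X_tᵀ *ᵥ w_o = X_tᵀ *ᵥ (wr + wl) := by
    rw [hXt, transpose_mul, ← mulVec_mulVec, ← mulVec_mulVec, hXrw_o, hyr, hws, mulVec_add,
      hXrwf, add_zero]
  have hw_t : w_t = w_o := by
    rw [hwt, hPt, ← mul_mul_transpose_mulVec_congr _ _ hXtw_o, sub_mulVec, one_mulVec,
      sub_add_cancel]
  refine ⟨?_, hw_t ▸ hXrw_o⟩
  rw [hw_t, hXrw_o, sub_self, dotProduct_zero, mul_zero]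

/-- remaining_loss_finetuned_overlap -/
theorem remaining_loss_finetuned_overlap
    (d_r d_lap d_f n_r n_f n_t : ℕ)
    (hd_r : 0 < d_r) (hd_lap : 0 < d_lap) (hd_f : 0 < d_f)
    (hn_r : 0 < n_r) (hn_f : 0 < n_f) (hn_t : 0 < n_t)
    (R : Matrix (Fin d_r) (Fin n_r) ℝ) (L1 : Matrix (Fin d_lap) (Fin n_r) ℝ)
    (L2 : Matrix (Fin d_lap) (Fin n_f) ℝ) (F : Matrix (Fin d_f) (Fin n_f) ℝ)
    (X_r : Matrix (Fin d_r ⊕ (Fin d_lap ⊕ Fin d_f)) (Fin n_r) ℝ)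
    (hXr : X_r = Matrix.fromRows R (Matrix.fromRows L1 0))
    (X_f : Matrix (Fin d_r ⊕ (Fin d_lap ⊕ Fin d_f)) (Fin n_f) ℝ)
    (hXf : X_f = Matrix.fromRows 0 (Matrix.fromRows L2 F))
    (X : Matrix (Fin d_r ⊕ (Fin d_lap ⊕ Fin d_f)) (Fin n_r ⊕ Fin n_f) ℝ)
    (hX : X = Matrix.fromCols X_r X_f)
    (hXinv : IsUnit (Xᵀ * X)) (hXrinv : IsUnit (X_rᵀ * X_r)) (hXfinv : IsUnit (X_fᵀ * X_f))
    (wr wl wf : Fin d_r ⊕ (Fin d_lap ⊕ Fin d_f) → ℝ)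
    (hwr : ∀ i, wr (Sum.inr i) = 0)
    (hwl1 : ∀ i, wl (Sum.inl i) = 0) (hwl2 : ∀ i, wl (Sum.inr (Sum.inr i)) = 0)
    (hwf1 : ∀ i, wf (Sum.inl i) = 0) (hwf2 : ∀ i, wf (Sum.inr (Sum.inl i)) = 0)
    (wstar : Fin d_r ⊕ (Fin d_lap ⊕ Fin d_f) → ℝ) (hws : wstar = wr + wl + wf)
    (y_r : Fin n_r → ℝ) (hyr : y_r = X_rᵀ *ᵥ wstar)
    (y_f : Fin n_f → ℝ) (hyf : y_f = X_fᵀ *ᵥ wstar)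
    (S : Matrix (Fin n_r) (Fin n_t) ℝ)
    (X_t : Matrix (Fin d_r ⊕ (Fin d_lap ⊕ Fin d_f)) (Fin n_t) ℝ) (hXt : X_t = X_r * S)
    (hXtinv : IsUnit (X_tᵀ * X_t))
    (P P_r P_t : Matrix (Fin d_r ⊕ (Fin d_lap ⊕ Fin d_f)) (Fin d_r ⊕ (Fin d_lap ⊕ Fin d_f)) ℝ)
    (hP : P = X * (Xᵀ * X)⁻¹ * Xᵀ)
    (hPr : P_r = X_r * (X_rᵀ * X_r)⁻¹ * X_rᵀ)
    (hPt : P_t = X_t * (X_tᵀ * X_t)⁻¹ * X_tᵀ)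
    (w_o w_t w_g : Fin d_r ⊕ (Fin d_lap ⊕ Fin d_f) → ℝ)
    (hwo : w_o = P *ᵥ wstar)
    (hwt : w_t = (1 - P_t) *ᵥ w_o + P_t *ᵥ (wr + wl))
    (hwg : w_g = P_r *ᵥ (wr + wl)) :
    (1 / (n_r : ℝ)) * ((X_rᵀ *ᵥ w_t - y_r) ⬝ᵥ (X_rᵀ *ᵥ w_t - y_r)) = 0 ∧ X_rᵀ *ᵥ w_t = y_r :=
  remaining_loss_finetuned_overlap_general d_r d_lap d_f n_r n_f n_t R L1 X_r hXr X_f X hX hXinv wr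
    wl wf hwf1 hwf2 wstar hws y_r hyr S X_t hXt P P_t hP hPt w_o w_t hwo hwt
end

section
/- Theorem 4.1, distinct-features scenario, remaining loss: after removing the forgetting-feature components from the pretrained model, the regularized fine-tuned model ŵ_t satisfies L(ŵ_t, D_r) = 0; equivalently, X_rᵀ ŵ_t = y_r. -/
/-!
Since the columns of `X_t = X_r S` lie in the column space of `X_r`, hence of `X`, the projections
satisfy `P_t P = P_t`; so the regularized fine-tuning step does not move the model at all:
`ŵ_t = ŵ_o - P_t P w_*^r + P_t w_*^r = ŵ_o = P w_*^r`. As `P` fixes the columns of `X_r`, also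
`X_rᵀ P = X_rᵀ`, whence `X_rᵀ ŵ_t = X_rᵀ w_*^r`, and this is `y_r` because `X_r` vanishes on the
forgetting features, where `w_*^f` lives.
-/

open Matrix

namespace Matrix

variable {K : Type*} [CommRing K] {m n k : Type*} [Fintype m] [Fintype n] [DecidableEq n]

/-- The orthogonal projection onto the column space of `A` when `Aᵀ A` is invertible (otherwise
`(Aᵀ A)⁻¹ = 0` and this is `0`). -/
noncomputable def colSpaceProj (A : Matrix m n K) : Matrix m m K :=
  A * (Aᵀ * A)⁻¹ * Aᵀ

theorem colSpaceProj_transpose (A : Matrix m n K) : (colSpaceProj A)ᵀ = colSpaceProj A := by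
  simp only [colSpaceProj, transpose_mul, transpose_nonsing_inv, transpose_transpose,
    Matrix.mul_assoc]

theorem colSpaceProj_mul_self {A : Matrix m n K} (hA : IsUnit (Aᵀ * A)) :
    colSpaceProj A * A = A := by
  simp only [colSpaceProj, Matrix.mul_assoc]
  rw [nonsing_inv_mul _ ((isUnit_iff_isUnit_det _).mp hA), Matrix.mul_one]

theorem colSpaceProj_mul_mul {A : Matrix m n K} (hA : IsUnit (Aᵀ * A)) (C : Matrix n k K) :
    colSpaceProj A * (A * C) = A * C := by
  rw [← Matrix.mul_assoc, colSpaceProj_mul_self hA]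

theorem transpose_mul_colSpaceProj {A : Matrix m n K} (hA : IsUnit (Aᵀ * A))
    (C : Matrix n k K) : (A * C)ᵀ * colSpaceProj A = (A * C)ᵀ := by
  rw [← colSpaceProj_transpose A, ← transpose_mul, colSpaceProj_mul_mul hA]

theorem colSpaceProj_mul_colSpaceProj [Fintype k] [DecidableEq k] {A : Matrix m n K}
    (hA : IsUnit (Aᵀ * A)) (C : Matrix n k K) :
    colSpaceProj (A * C) * colSpaceProj A = colSpaceProj (A * C) := by
  rw [colSpaceProj, Matrix.mul_assoc, transpose_mul_colSpaceProj hA]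

theorem one_sub_mulVec_mulVec_add_mulVec_of_mul_eq [DecidableEq m] {P Q : Matrix m m K}
    (hQP : Q * P = Q) (w : m → K) : (1 - Q) *ᵥ (P *ᵥ w) + Q *ᵥ w = P *ᵥ w := by
  rw [mulVec_mulVec, Matrix.sub_mul, Matrix.one_mul, hQP, sub_mulVec, sub_add_cancel]

omit [Fintype n] [DecidableEq n] in
theorem transpose_fromRows_zero_mulVec_eq_zero {m₁ m₂ : Type*} [Fintype m₁] [Fintype m₂]
    (B : Matrix m₁ n K) (v : m₁ ⊕ m₂ → K) (hv : ∀ i, v (Sum.inl i) = 0) :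
    (fromRows B (0 : Matrix m₂ n K))ᵀ *ᵥ v = 0 := by
  have hv' : v ∘ Sum.inl = 0 := funext hv
  rw [transpose_fromRows, fromCols_mulVec, hv', transpose_zero, mulVec_zero, zero_mulVec,
    add_zero]

end Matrix

theorem regularized_remaining_loss_distinct_general
    (d_r d_f n_r n_f n_t : ℕ)
    (R : Matrix (Fin d_r) (Fin n_r) ℝ)
    (X_r : Matrix (Fin d_r ⊕ Fin d_f) (Fin n_r) ℝ) (hXr : X_r = Matrix.fromRows R 0)
    (X_f : Matrix (Fin d_r ⊕ Fin d_f) (Fin n_f) ℝ)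
    (X : Matrix (Fin d_r ⊕ Fin d_f) (Fin n_r ⊕ Fin n_f) ℝ) (hX : X = Matrix.fromCols X_r X_f)
    (hXinv : IsUnit (Xᵀ * X))
    (wr wf : Fin d_r ⊕ Fin d_f → ℝ)
    (hwf : ∀ i, wf (Sum.inl i) = 0)
    (wstar : Fin d_r ⊕ Fin d_f → ℝ) (hws : wstar = wr + wf)
    (y_r : Fin n_r → ℝ) (hyr : y_r = X_rᵀ *ᵥ wstar)
    (S : Matrix (Fin n_r) (Fin n_t) ℝ)
    (X_t : Matrix (Fin d_r ⊕ Fin d_f) (Fin n_t) ℝ) (hXt : X_t = X_r * S)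
    (P P_t : Matrix (Fin d_r ⊕ Fin d_f) (Fin d_r ⊕ Fin d_f) ℝ)
    (hP : P = X * (Xᵀ * X)⁻¹ * Xᵀ)
    (hPt : P_t = X_t * (X_tᵀ * X_t)⁻¹ * X_tᵀ)
    (hatw_o hatw_t : Fin d_r ⊕ Fin d_f → ℝ)
    (hhato : hatw_o = P *ᵥ wr)
    (hhatt : hatw_t = (1 - P_t) *ᵥ hatw_o + P_t *ᵥ wr) :
    (1 / (n_r : ℝ)) * ((X_rᵀ *ᵥ hatw_t - y_r) ⬝ᵥ (X_rᵀ *ᵥ hatw_t - y_r)) = 0 ∧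
      X_rᵀ *ᵥ hatw_t = y_r := by
  replace hP : P = colSpaceProj X := hP
  replace hPt : P_t = colSpaceProj X_t := hPt
  have hXr_cols :
      X_r = X * fromRows (1 : Matrix (Fin n_r) (Fin n_r) ℝ) (0 : Matrix (Fin n_f) _ _) := by
    rw [hX, fromCols_mul_fromRows, Matrix.mul_one, Matrix.mul_zero, add_zero]
  have hPtP : P_t * P = P_t := by
    rw [hPt, hP, hXt, hXr_cols, Matrix.mul_assoc]
    exact colSpaceProj_mul_colSpaceProj hXinv _
  have hXrP : X_rᵀ * P = X_rᵀ := by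
    rw [hP, hXr_cols]
    exact transpose_mul_colSpaceProj hXinv _
  have hXrwf : X_rᵀ *ᵥ wf = 0 := hXr ▸ transpose_fromRows_zero_mulVec_eq_zero R wf hwf
  have hfit : X_rᵀ *ᵥ hatw_t = y_r := by
    rw [hhatt, hhato, one_sub_mulVec_mulVec_add_mulVec_of_mul_eq hPtP, mulVec_mulVec, hXrP, hyr,
      hws, mulVec_add, hXrwf, add_zero]
  exact ⟨by simp [hfit], hfit⟩

/-- regularized_remaining_loss_distinct -/
theorem regularized_remaining_loss_distinct
    (d_r d_f n_r n_f n_t : ℕ)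
    (hd_r : 0 < d_r) (hd_f : 0 < d_f) (hn_r : 0 < n_r) (hn_f : 0 < n_f) (hn_t : 0 < n_t)
    (R : Matrix (Fin d_r) (Fin n_r) ℝ) (F : Matrix (Fin d_f) (Fin n_f) ℝ)
    (hR : IsUnit (Rᵀ * R)) (hF : IsUnit (Fᵀ * F))
    (X_r : Matrix (Fin d_r ⊕ Fin d_f) (Fin n_r) ℝ) (hXr : X_r = Matrix.fromRows R 0)
    (X_f : Matrix (Fin d_r ⊕ Fin d_f) (Fin n_f) ℝ) (hXf : X_f = Matrix.fromRows 0 F)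
    (X : Matrix (Fin d_r ⊕ Fin d_f) (Fin n_r ⊕ Fin n_f) ℝ) (hX : X = Matrix.fromCols X_r X_f)
    (hXinv : IsUnit (Xᵀ * X))
    (wr wf : Fin d_r ⊕ Fin d_f → ℝ)
    (hwr : ∀ i, wr (Sum.inr i) = 0) (hwf : ∀ i, wf (Sum.inl i) = 0)
    (wstar : Fin d_r ⊕ Fin d_f → ℝ) (hws : wstar = wr + wf)
    (y_r : Fin n_r → ℝ) (hyr : y_r = X_rᵀ *ᵥ wstar)
    (y_f : Fin n_f → ℝ) (hyf : y_f = X_fᵀ *ᵥ wstar)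
    (S : Matrix (Fin n_r) (Fin n_t) ℝ)
    (X_t : Matrix (Fin d_r ⊕ Fin d_f) (Fin n_t) ℝ) (hXt : X_t = X_r * S)
    (hXtinv : IsUnit (X_tᵀ * X_t))
    (P P_r P_t : Matrix (Fin d_r ⊕ Fin d_f) (Fin d_r ⊕ Fin d_f) ℝ)
    (hP : P = X * (Xᵀ * X)⁻¹ * Xᵀ)
    (hPr : P_r = X_r * (X_rᵀ * X_r)⁻¹ * X_rᵀ)
    (hPt : P_t = X_t * (X_tᵀ * X_t)⁻¹ * X_tᵀ)
    (hatw_o hatw_t : Fin d_r ⊕ Fin d_f → ℝ)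
    (hhato : hatw_o = P *ᵥ wr)
    (hhatt : hatw_t = (1 - P_t) *ᵥ hatw_o + P_t *ᵥ wr) :
    (1 / (n_r : ℝ)) * ((X_rᵀ *ᵥ hatw_t - y_r) ⬝ᵥ (X_rᵀ *ᵥ hatw_t - y_r)) = 0 ∧
      X_rᵀ *ᵥ hatw_t = y_r :=
  regularized_remaining_loss_distinct_general d_r d_f n_r n_f n_t R X_r hXr X_f X hX hXinv wr wf hwf
    wstar hws y_r hyr S X_t hXt P P_t hP hPt hatw_o hatw_t hhato hhatt
end
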